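/- For every α > 0 and every (k₀,h₀) ∈ (0,∞)², the value function satisfies V(α·k₀, α·h₀) = α^{(1−γ)(1−σ)}·V(k₀,h₀) (as an identity in [−∞,0], with the convention α^{(1−γ)(1−σ)}·(−∞) = −∞). -/
import Mathlib


open MeasureTheory ProbabilityTheory Real Set Matrix
open scoped ENNReal NNReal

noncomputable section

namespace HabitModel

/-- A standard Brownian motion with respect to the filtration `F`: adapted, with continuous
paths started at `0`, whose increments are independent of the past and Gaussian. -/
structure IsStdBM {Ω : Type*} {mΩ : MeasurableSpace Ω} (P : Measure Ω)
    (F : Filtration ℝ mΩ) (W : ℝ → Ω → ℝ) : Prop where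
  adapted : Adapted F W
  cont : ∀ ω, Continuous fun t => W t ω
  init : ∀ ω, W 0 ω = 0
  indep_incr : ∀ s t : ℝ, 0 ≤ s → s ≤ t →
    Indep (MeasurableSpace.comap (fun ω => W t ω - W s ω) inferInstance) (F s) P
  gauss_incr : ∀ s t : ℝ, 0 ≤ s → s ≤ t →
    P.map (fun ω => W t ω - W s ω) = gaussianReal 0 (Real.toNNReal (t - s))

/-- The stochastic setting of the model: a filtered probability space carrying two
independent standard Brownian motions, together with the model parameters. -/
structure Setting (Ω : Type*) [mΩ : MeasurableSpace Ω] where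
  P : Measure Ω
  isProb : IsProbabilityMeasure P
  F : Filtration ℝ mΩ
  W1 : ℝ → Ω → ℝ
  W2 : ℝ → Ω → ℝ
  bm1 : IsStdBM P F W1
  bm2 : IsStdBM P F W2
  indepW : Indep (⨆ t : ℝ, MeasurableSpace.comap (W1 t) inferInstance)
      (⨆ t : ℝ, MeasurableSpace.comap (W2 t) inferInstance) P
  B : ℝ
  β₁ : ℝ
  β₂ : ℝ
  ρ : ℝ
  θ : ℝ
  σ : ℝ
  γ : ℝ
  R : ℝ
  hB : 0 ≤ B
  hβ₁ : 0 < β₁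
  hβ₂ : 0 < β₂
  hρ₀ : 0 < ρ
  hρ₁ : ρ < 1
  hθ : 0 < θ
  hσ : 1 < σ
  hγ₀ : 0 ≤ γ
  hγ₁ : γ < 1
  hR : 0 < R

variable {Ω : Type*} [mΩ : MeasurableSpace Ω]

/-- Pathwise-explicit solution of `dk_t = (B k_t - c_t) dt + β₁ k_t dW¹_t`, `k_0 = k₀`. -/
def kProc (S : Setting Ω) (k₀ : ℝ) (c : ℝ → Ω → ℝ) (t : ℝ) (ω : Ω) : ℝ :=
  Real.exp ((S.B - S.β₁ ^ 2 / 2) * t + S.β₁ * S.W1 t ω) *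
    (k₀ - ∫ s in (0:ℝ)..t, c s ω * Real.exp (-((S.B - S.β₁ ^ 2 / 2) * s) - S.β₁ * S.W1 s ω))

/-- Pathwise-explicit solution of `dh_t = ρ (c_t - h_t) dt + β₂ h_t dW²_t`, `h_0 = h₀`. -/
def hProc (S : Setting Ω) (h₀ : ℝ) (c : ℝ → Ω → ℝ) (t : ℝ) (ω : Ω) : ℝ :=
  Real.exp ((-S.ρ - S.β₂ ^ 2 / 2) * t + S.β₂ * S.W2 t ω) *
    (h₀ + S.ρ * ∫ s in (0:ℝ)..t, c s ω * Real.exp ((S.ρ + S.β₂ ^ 2 / 2) * s - S.β₂ * S.W2 s ω))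

/-- Admissibility of a control `c` for the initial condition `(k₀, h₀)`: progressively
measurable, a.s. locally integrable trajectories, `c > 0` ℙ⊗dt-a.e., positive state
processes, and `c ≤ R·k` ℙ⊗dt-a.e. -/
structure IsAdmissible (S : Setting Ω) (k₀ h₀ : ℝ) (c : ℝ → Ω → ℝ) : Prop where
  prog : ProgMeasurable S.F c
  locInt : ∀ᵐ ω ∂S.P, ∀ t : ℝ, 0 ≤ t → IntervalIntegrable (fun s => c s ω) volume 0 t
  cpos : ∀ᵐ ω ∂S.P, ∀ᵐ t ∂(volume.restrict (Set.Ici (0:ℝ))), 0 < c t ω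
  kpos : ∀ᵐ ω ∂S.P, ∀ t : ℝ, 0 ≤ t → 0 < kProc S k₀ c t ω
  hpos : ∀ᵐ ω ∂S.P, ∀ t : ℝ, 0 ≤ t → 0 < hProc S h₀ c t ω
  cbdd : ∀ᵐ ω ∂S.P, ∀ᵐ t ∂(volume.restrict (Set.Ici (0:ℝ))), c t ω ≤ S.R * kProc S k₀ c t ω

/-- The (nonnegative) cost `-J(k₀,h₀;c) ∈ [0,∞]`; note that
`(1/(1-σ))·(c/h^γ)^(1-σ) = -(1/(σ-1))·(h^γ/c)^(σ-1)`. -/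
def Jcost (S : Setting Ω) (k₀ h₀ : ℝ) (c : ℝ → Ω → ℝ) : ℝ≥0∞ :=
  ∫⁻ ω, (∫⁻ t in Set.Ioi (0:ℝ),
    ENNReal.ofReal ((S.σ - 1)⁻¹ * ((hProc S h₀ c t ω) ^ S.γ / c t ω) ^ (S.σ - 1) *
      Real.exp (-S.θ * t))) ∂S.P

/-- The utility functional `J(k₀,h₀;c) ∈ [-∞,0]`. -/
def J (S : Setting Ω) (k₀ h₀ : ℝ) (c : ℝ → Ω → ℝ) : EReal := -(Jcost S k₀ h₀ c : EReal)

/-- The infimum of the costs `-J(k₀,h₀;c)` over admissible controls. -/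
def Vcost (S : Setting Ω) (k₀ h₀ : ℝ) : ℝ≥0∞ :=
  ⨅ c : {c : ℝ → Ω → ℝ // IsAdmissible S k₀ h₀ c}, Jcost S k₀ h₀ c.1

/-- The value function `V(k₀,h₀) = sup_{c ∈ 𝓐(k₀,h₀)} J(k₀,h₀;c) ∈ [-∞,0]`
(the supremum of `J = -Jcost` equals minus the infimum of the costs). -/
def V (S : Setting Ω) (k₀ h₀ : ℝ) : EReal := -(Vcost S k₀ h₀ : EReal)

/-- Assumption 1 on the model parameters (with `λ = max{2, 1/(γ(σ-1))}`; it forces `γ > 0`). -/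
def Assumption1 (S : Setting Ω) : Prop :=
  S.B ≤ S.R ∧ 0 < S.γ ∧
    (S.ρ + (S.β₂ ^ 2 - S.β₁ ^ 2) / 2 ≤ 0 →
      (S.σ - 1) * (-S.γ * S.ρ - (S.γ * S.β₂ ^ 2 - S.β₁ ^ 2) / 2 +
        max 2 (1 / (S.γ * (S.σ - 1))) * (S.σ - 1) * (S.β₁ ^ 2 + S.γ ^ 2 * S.β₂ ^ 2)) < S.θ) ∧
    (0 < S.ρ + (S.β₂ ^ 2 - S.β₁ ^ 2) / 2 →
      (S.σ - 1) * (S.β₁ ^ 2 * (1 - S.γ) / 2 +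
        max 2 (1 / (S.γ * (S.σ - 1))) * (S.σ - 1) * (S.β₁ ^ 2 + S.γ ^ 2 * S.β₂ ^ 2)) < S.θ)


section Homog

variable {Ω : Type*} [mΩ : MeasurableSpace Ω]

lemma kProc_smul (S : Setting Ω) (k₀ α : ℝ) (c : ℝ → Ω → ℝ) (t : ℝ) (ω : Ω) :
    kProc S (α * k₀) (fun s ω => α * c s ω) t ω = α * kProc S k₀ c t ω := by
  unfold kProc
  have : (∫ s in (0:ℝ)..t,
      (α * c s ω) * Real.exp (-((S.B - S.β₁ ^ 2 / 2) * s) - S.β₁ * S.W1 s ω))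
      = α * ∫ s in (0:ℝ)..t,
        c s ω * Real.exp (-((S.B - S.β₁ ^ 2 / 2) * s) - S.β₁ * S.W1 s ω) := by
    rw [← intervalIntegral.integral_const_mul]
    simp_rw [mul_assoc]
  rw [this]; ring

lemma hProc_smul (S : Setting Ω) (h₀ α : ℝ) (c : ℝ → Ω → ℝ) (t : ℝ) (ω : Ω) :
    hProc S (α * h₀) (fun s ω => α * c s ω) t ω = α * hProc S h₀ c t ω := by
  unfold hProc
  have : (∫ s in (0:ℝ)..t,
      (α * c s ω) * Real.exp ((S.ρ + S.β₂ ^ 2 / 2) * s - S.β₂ * S.W2 s ω))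
      = α * ∫ s in (0:ℝ)..t,
        c s ω * Real.exp ((S.ρ + S.β₂ ^ 2 / 2) * s - S.β₂ * S.W2 s ω) := by
    rw [← intervalIntegral.integral_const_mul]
    simp_rw [mul_assoc]
  rw [this]; ring

lemma IsAdmissible.smul {S : Setting Ω} {k₀ h₀ : ℝ} {c : ℝ → Ω → ℝ} {α : ℝ} (hα : 0 < α)
    (hc : IsAdmissible S k₀ h₀ c) :
    IsAdmissible S (α * k₀) (α * h₀) (fun s ω => α * c s ω) where
  prog := (progMeasurable_const S.F α).mul hc.prog
  locInt := by
    filter_upwards [hc.locInt] with ω hω t ht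
    exact (hω t ht).const_mul α
  cpos := by
    filter_upwards [hc.cpos] with ω hω
    filter_upwards [hω] with t ht
    exact mul_pos hα ht
  kpos := by
    filter_upwards [hc.kpos] with ω hω t ht
    rw [kProc_smul]
    exact mul_pos hα (hω t ht)
  hpos := by
    filter_upwards [hc.hpos] with ω hω t ht
    rw [hProc_smul]
    exact mul_pos hα (hω t ht)
  cbdd := by
    filter_upwards [hc.cbdd] with ω hω
    filter_upwards [hω] with t ht
    rw [kProc_smul, mul_left_comm]
    exact mul_le_mul_of_nonneg_left ht hα.le

private lemma rpow_key {α h c γ σ : ℝ} (hα : 0 < α) (hh : 0 < h) (hc : 0 < c) :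
    ((α * h) ^ γ / (α * c)) ^ (σ - 1)
      = α ^ ((1 - γ) * (1 - σ)) * (h ^ γ / c) ^ (σ - 1) := by
  have hαh : (α * h) ^ γ = α ^ γ * h ^ γ := Real.mul_rpow hα.le hh.le
  have h1 : (α * h) ^ γ / (α * c) = α ^ (γ - 1) * (h ^ γ / c) := by
    rw [hαh, Real.rpow_sub hα, Real.rpow_one]
    field_simp
  rw [h1, Real.mul_rpow (by positivity) (by positivity), ← Real.rpow_mul hα.le]
  ring_nf

lemma Jcost_smul {S : Setting Ω} {k₀ h₀ : ℝ} {c : ℝ → Ω → ℝ} {α : ℝ} (hα : 0 < α)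
    (hc : IsAdmissible S k₀ h₀ c) :
    Jcost S (α * k₀) (α * h₀) (fun s ω => α * c s ω)
      = ENNReal.ofReal (α ^ ((1 - S.γ) * (1 - S.σ))) * Jcost S k₀ h₀ c := by
  have hS := S.isProb
  set a : ℝ := α ^ ((1 - S.γ) * (1 - S.σ)) with ha
  have ha0 : 0 ≤ a := (Real.rpow_pos_of_pos hα _).le
  unfold Jcost
  rw [← lintegral_const_mul' _ _ ENNReal.ofReal_ne_top]
  apply lintegral_congr_ae
  filter_upwards [hc.cpos, hc.hpos] with ω hcpos hhpos
  rw [← lintegral_const_mul' _ _ ENNReal.ofReal_ne_top]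
  apply lintegral_congr_ae
  have hcpos' : ∀ᵐ t ∂(volume.restrict (Set.Ioi (0:ℝ))), 0 < c t ω :=
    ae_restrict_of_ae_restrict_of_subset Set.Ioi_subset_Ici_self hcpos
  filter_upwards [hcpos', ae_restrict_mem measurableSet_Ioi] with t htc htmem
  rw [hProc_smul, rpow_key hα (hhpos t (le_of_lt htmem)) htc, ← ENNReal.ofReal_mul ha0]
  congr 1
  ring

lemma Vcost_smul {S : Setting Ω} {k₀ h₀ : ℝ} {α : ℝ} (hα : 0 < α) :
    Vcost S (α * k₀) (α * h₀)
      = ENNReal.ofReal (α ^ ((1 - S.γ) * (1 - S.σ))) * Vcost S k₀ h₀ := by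
  set a : ℝ≥0∞ := ENNReal.ofReal (α ^ ((1 - S.γ) * (1 - S.σ))) with ha
  have ha0 : a ≠ 0 := by
    simp [ha, ENNReal.ofReal_eq_zero, not_le, Real.rpow_pos_of_pos hα]
  refine le_antisymm ?_ ?_
  · conv_rhs => rw [Vcost, ENNReal.mul_iInf_of_ne ha0 ENNReal.ofReal_ne_top]
    refine le_iInf fun ⟨c, hc⟩ => ?_
    have := Jcost_smul hα hc
    calc Vcost S (α * k₀) (α * h₀)
        ≤ Jcost S (α * k₀) (α * h₀) (fun s ω => α * c s ω) :=
          iInf_le (fun c : {c // IsAdmissible S (α * k₀) (α * h₀) c} => Jcost S (α * k₀) (α * h₀) c.1)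
            ⟨_, hc.smul hα⟩
      _ = a * Jcost S k₀ h₀ c := this
  · refine le_iInf fun ⟨c', hc'⟩ => ?_
    have hc2 : IsAdmissible S k₀ h₀ (fun s ω => α⁻¹ * c' s ω) := by
      have := hc'.smul (inv_pos.mpr hα)
      rwa [inv_mul_cancel_left₀ hα.ne', inv_mul_cancel_left₀ hα.ne'] at this
    have key : Jcost S (α * k₀) (α * h₀) c' = a * Jcost S k₀ h₀ (fun s ω => α⁻¹ * c' s ω) := by
      have := Jcost_smul hα hc2
      simpa [mul_inv_cancel_left₀ hα.ne'] using this
    rw [key]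
    exact mul_le_mul_right (iInf_le (fun c : {c // IsAdmissible S k₀ h₀ c} => Jcost S k₀ h₀ c.1)
      ⟨_, hc2⟩) a

end Homog

/-- Homogeneity of the value function:
`V(α·k₀, α·h₀) = α^{(1-γ)(1-σ)}·V(k₀,h₀)` in `[-∞,0]`. -/
theorem V_homogeneous (S : Setting Ω) (α k₀ h₀ : ℝ) (hα : 0 < α)
    (hk₀ : 0 < k₀) (hh₀ : 0 < h₀) :
    V S (α * k₀) (α * h₀) = ((α ^ ((1 - S.γ) * (1 - S.σ)) : ℝ) : EReal) * V S k₀ h₀ := by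
  rw [V, V, Vcost_smul hα, EReal.coe_ennreal_mul, ← mul_neg]
  congr 1
  rw [EReal.coe_ennreal_ofReal]
  norm_cast
  exact max_eq_left (Real.rpow_pos_of_pos hα _).le

end HabitModel
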